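/- arXiv:2504.03605 — 2 statements merged into one kernel-verified Lean document; each statement's English description precedes it below -/
import Mathlib

section
/- Let φ : {0,1}ⁿ → {0,1}ᴺ be an isometric embedding of the Hamming metric into the edit metric with associated injective index map η : [n] → [N]. Let S ⊆ [N] be the complement of the image of η. Then for all x, y ∈ {0,1}ⁿ, the restriction of φ(x) to the index set S equals the restriction of φ(y) to S. -/
namespace Levenshtein

/-- Costs of the edit operations (as in the older Mathlib's `Levenshtein.Cost`). -/
structure Cost (α β δ : Type*) where
  delete : α → δ
  insert : β → δ
  substitute : α → β → δ

/-- The default cost: deletions, insertions and substitutions of distinct symbols cost 1. -/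
def defaultCost {α : Type*} [DecidableEq α] : Cost α α ℕ where
  delete _ := 1
  insert _ := 1
  substitute a b := if a = b then 0 else 1

end Levenshtein

/-- Levenshtein distance with cost `C`, by the standard recursion
(the older Mathlib's `levenshtein`, which satisfies exactly these equations). -/
def levenshtein {α β δ : Type*} [AddZeroClass δ] [Min δ] (C : Levenshtein.Cost α β δ) :
    List α → List β → δ
  | [], [] => 0
  | [], y :: ys => C.insert y + levenshtein C [] ys
  | x :: xs, [] => C.delete x + levenshtein C xs []
  | x :: xs, y :: ys =>
    min (C.delete x + levenshtein C xs (y :: ys))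
      (min (C.insert y + levenshtein C (x :: xs) ys) (C.substitute x y + levenshtein C xs ys))

/-- Edit (Levenshtein) distance between two lists. -/
def editDist {α : Type*} [DecidableEq α] (x y : List α) : ℕ :=
  levenshtein Levenshtein.defaultCost x y

/-- Flip the `i`-th bit of a binary string. -/
def flipBit {n : ℕ} (x : Fin n → Bool) (i : Fin n) : Fin n → Bool :=
  Function.update x i (!x i)

theorem stmt_10 {n N : ℕ} (φ : (Fin n → Bool) → (Fin N → Bool))
    (hiso : ∀ x y : Fin n → Bool,
      editDist (List.ofFn (φ x)) (List.ofFn (φ y)) = hammingDist x y)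
    (η : Fin n → Fin N) (hinj : Function.Injective η)
    (hη : ∀ (x : Fin n → Bool) (i : Fin n),
      φ (flipBit x i) = Function.update (φ x) (η i) (!(φ x (η i)))) :
    ∀ (x y : Fin n → Bool) (j : Fin N), j ∉ Set.range η → φ x j = φ y j := by
  intro x y j hj
  have key : ∀ d (x : Fin n → Bool), hammingDist x y ≤ d → φ x j = φ y j := by
    intro d
    induction d with
    | zero =>
      intro x hx
      have : hammingDist x y = 0 := Nat.le_zero.mp hx
      rw [hammingDist_eq_zero.mp this]
    | succ d ih =>
      intro x hx
      by_cases hxy : x = y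
      · rw [hxy]
      · obtain ⟨i, hi⟩ : ∃ i, x i ≠ y i := Function.ne_iff.mp hxy
        have hflip : flipBit x i i = y i := by
          simp only [flipBit, Function.update_self]
          cases hxi : x i <;> cases hyi : y i <;> simp_all
        have hother : ∀ k, k ≠ i → flipBit x i k = x k := by
          intro k hk
          simp [flipBit, Function.update_of_ne hk]
        have hdist : hammingDist (flipBit x i) y ≤ d := by
          have hsub : (Finset.univ.filter fun k => flipBit x i k ≠ y k) ⊆
              (Finset.univ.filter fun k => x k ≠ y k).erase i := by
            intro k hk
            simp only [Finset.mem_filter, Finset.mem_univ, true_and] at hk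
            rcases eq_or_ne k i with rfl | hki
            · exact absurd hflip hk
            · simp only [Finset.mem_erase, Finset.mem_filter, Finset.mem_univ, true_and]
              exact ⟨hki, by rwa [← hother k hki]⟩
          have hmem : i ∈ Finset.univ.filter fun k => x k ≠ y k := by
            simp [hi]
          have h1 : hammingDist (flipBit x i) y ≤
              ((Finset.univ.filter fun k => x k ≠ y k).erase i).card :=
            Finset.card_le_card hsub
          have h2 : ((Finset.univ.filter fun k => x k ≠ y k).erase i).card =
              hammingDist x y - 1 := by
            rw [Finset.card_erase_of_mem hmem]; rfl
          omega
        have hstep : φ x j = φ (flipBit x i) j := by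
          rw [hη x i, Function.update_of_ne]
          intro h
          exact hj ⟨i, h.symm⟩
        rw [hstep]
        exact ih _ hdist
  exact key _ x le_rfl
end

section
/- Every isometric embedding φ : {0,1}ⁿ → {0,1}ᴺ of the Hamming metric into the edit metric is an interleaved embedding: there exist an injective function η : [n] → [N], functions π₁,...,πₙ : {0,1} → {0,1} each equal to the identity or to negation, and a fixed string w ∈ {0,1}^{N−n}, such that for all x ∈ {0,1}ⁿ, setting X = φ(x), one has X[η(i)] = π_i(x[i]) for all i ∈ [n], and the restriction of X to the indices outside the image of η equals w. -/
namespace Levenshtein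

@[simp] theorem defaultCost_delete {α : Type*} [DecidableEq α] (a : α) :
    (defaultCost : Cost α α ℕ).delete a = 1 := rfl

@[simp] theorem defaultCost_insert {α : Type*} [DecidableEq α] (a : α) :
    (defaultCost : Cost α α ℕ).insert a = 1 := rfl

@[simp] theorem defaultCost_substitute {α : Type*} [DecidableEq α] (a b : α) :
    (defaultCost : Cost α α ℕ).substitute a b = if a = b then 0 else 1 := rfl

end Levenshtein

@[simp] theorem levenshtein_nil_nil {α β δ : Type*} [AddZeroClass δ] [Min δ]
    (C : Levenshtein.Cost α β δ) : levenshtein C [] [] = 0 := by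
  rw [levenshtein]

@[simp] theorem levenshtein_nil_cons {α β δ : Type*} [AddZeroClass δ] [Min δ]
    (C : Levenshtein.Cost α β δ) (y : β) (ys : List β) :
    levenshtein C [] (y :: ys) = C.insert y + levenshtein C [] ys := by
  rw [levenshtein]

@[simp] theorem levenshtein_cons_nil {α β δ : Type*} [AddZeroClass δ] [Min δ]
    (C : Levenshtein.Cost α β δ) (x : α) (xs : List α) :
    levenshtein C (x :: xs) [] = C.delete x + levenshtein C xs [] := by
  rw [levenshtein]

theorem levenshtein_cons_cons {α β δ : Type*} [AddZeroClass δ] [Min δ]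
    (C : Levenshtein.Cost α β δ) (x : α) (xs : List α) (y : β) (ys : List β) :
    levenshtein C (x :: xs) (y :: ys) =
      min (C.delete x + levenshtein C xs (y :: ys))
        (min (C.insert y + levenshtein C (x :: xs) ys) (C.substitute x y + levenshtein C xs ys)) := by
  rw [levenshtein]

open scoped symmDiff

open Levenshtein in
lemma lev_eq_zero : ∀ (x y : List Bool), levenshtein defaultCost x y = 0 → x = y := by
  intro x
  induction x with
  | nil => intro y _; cases y with
    | nil => rfl
    | cons b ys => simp_all
  | cons a xs ih =>
    intro y h
    cases y with
    | nil => simp_all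
    | cons b ys =>
      simp only [levenshtein_cons_cons, Nat.min_eq_zero_iff] at h
      rcases h with h | h | h
      · simp [defaultCost] at h
      · simp [defaultCost] at h
      · simp only [Nat.add_eq_zero] at h
        obtain ⟨h1, h2⟩ := h
        have : a = b := by by_contra hab; simp [defaultCost, hab] at h1
        rw [this, ih ys h2]

lemma ham_succ {N : ℕ} (f g : Fin (N+1) → Bool) :
    hammingDist f g = (if f 0 = g 0 then 0 else 1) +
      hammingDist (fun i : Fin N => f i.succ) (fun i => g i.succ) := by
  have key : ∀ {M : ℕ} (u v : Fin M → Bool),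
      hammingDist u v = ∑ i, if u i = v i then 0 else 1 := by
    intro M u v
    rw [hammingDist, Finset.card_filter]
    congr 1; ext i; by_cases h : u i = v i <;> simp [h]
  rw [key, key, Fin.sum_univ_succ]

open Levenshtein in
lemma lev_le_ham : ∀ {N : ℕ} (f g : Fin N → Bool),
    levenshtein defaultCost (List.ofFn f) (List.ofFn g) ≤ hammingDist f g := by
  intro N
  induction N with
  | zero => intro f g; simp
  | succ M ih =>
    intro f g
    rw [List.ofFn_succ, List.ofFn_succ, levenshtein_cons_cons, ham_succ]
    refine le_trans (le_trans (min_le_right _ _) (min_le_right _ _)) ?_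
    refine Nat.add_le_add ?_ (ih _ _)
    by_cases h : f 0 = g 0 <;> simp [defaultCost, h]

open Levenshtein in
lemma lev_one_ham : ∀ {N : ℕ} (f g : Fin N → Bool),
    levenshtein defaultCost (List.ofFn f) (List.ofFn g) = 1 → hammingDist f g = 1 := by
  intro N
  induction N with
  | zero => intro f g h; simp at h
  | succ M ih =>
    intro f g h
    rw [List.ofFn_succ, List.ofFn_succ, levenshtein_cons_cons] at h
    rw [ham_succ]
    have hlen : ∀ (u v : List Bool), u.length ≠ v.length →
        levenshtein defaultCost u v ≠ 0 := by
      intro u v hne h0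
      exact hne (by rw [lev_eq_zero _ _ h0])
    have h1 : 1 ≤ levenshtein defaultCost (List.ofFn fun i => f i.succ)
        (g 0 :: List.ofFn fun i => g i.succ) :=
      Nat.pos_of_ne_zero (hlen _ _ (by simp))
    have h2 : 1 ≤ levenshtein defaultCost (f 0 :: List.ofFn fun i => f i.succ)
        (List.ofFn fun i => g i.succ) :=
      Nat.pos_of_ne_zero (hlen _ _ (by simp))
    have h3 : defaultCost.substitute (f 0) (g 0) +
        levenshtein defaultCost (List.ofFn fun i => f i.succ)
          (List.ofFn fun i => g i.succ) = 1 := by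
      have hd : defaultCost.delete (f 0) = 1 := rfl
      have hi : defaultCost.insert (g 0) = 1 := rfl
      rw [Nat.min_def, Nat.min_def] at h
      split_ifs at h <;> omega
    by_cases hfg : f 0 = g 0
    · have hs : defaultCost.substitute (f 0) (g 0) = 0 := by simp [defaultCost, hfg]
      rw [hs, Nat.zero_add] at h3
      rw [if_pos hfg, ih _ _ h3]
    · have hs : defaultCost.substitute (f 0) (g 0) = 1 := by simp [defaultCost, hfg]
      rw [hs] at h3
      have hC := lev_eq_zero _ _ (by omega : levenshtein defaultCost
        (List.ofFn fun i => f i.succ) (List.ofFn fun i => g i.succ) = 0)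
      have heq : (fun i : Fin M => f i.succ) = fun i => g i.succ :=
        List.ofFn_injective hC
      rw [if_neg hfg, heq, hammingDist_self]

lemma flipBit_self {n : ℕ} (x : Fin n → Bool) (i : Fin n) : flipBit x i i = !x i := by
  simp [flipBit]

lemma flipBit_ne {n : ℕ} (x : Fin n → Bool) {i j : Fin n} (h : j ≠ i) :
    flipBit x i j = x j := by
  simp [flipBit, Function.update_of_ne h]

lemma flipBit_flipBit {n : ℕ} (x : Fin n → Bool) (i : Fin n) :
    flipBit (flipBit x i) i = x := by
  funext j
  by_cases h : j = i
  · subst h; simp [flipBit_self]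
  · rw [flipBit_ne _ h, flipBit_ne _ h]

def Dset {N : ℕ} (u v : Fin N → Bool) : Finset (Fin N) :=
  Finset.univ.filter (fun j => u j ≠ v j)

lemma card_Dset {N : ℕ} (u v : Fin N → Bool) : (Dset u v).card = hammingDist u v := rfl

lemma Dset_comm {N : ℕ} (u v : Fin N → Bool) : Dset u v = Dset v u := by
  ext j; simp [Dset, ne_comm]

lemma mem_Dset {N : ℕ} {u v : Fin N → Bool} {j : Fin N} : j ∈ Dset u v ↔ u j ≠ v j := by
  simp [Dset]

lemma ham_flip {n : ℕ} (x : Fin n → Bool) (i : Fin n) :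
    hammingDist x (flipBit x i) = 1 := by
  rw [← card_Dset]
  have : Dset x (flipBit x i) = {i} := by
    ext j
    rw [mem_Dset, Finset.mem_singleton]
    constructor
    · intro h; by_contra hj; exact h (by rw [flipBit_ne _ hj])
    · intro h; subst h; simp [flipBit_self]
  rw [this, Finset.card_singleton]

lemma ham_flip2 {n : ℕ} (x : Fin n → Bool) {i k : Fin n} (hik : i ≠ k) :
    hammingDist x (flipBit (flipBit x i) k) = 2 := by
  rw [← card_Dset]
  have : Dset x (flipBit (flipBit x i) k) = {i, k} := by
    ext j
    rw [mem_Dset, Finset.mem_insert, Finset.mem_singleton]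
    by_cases hjk : j = k
    · subst hjk; simp [flipBit_self, flipBit_ne x (Ne.symm hik)]
    · rw [flipBit_ne _ hjk]
      by_cases hji : j = i
      · subst hji; simp [flipBit_self, hjk]
      · rw [flipBit_ne _ hji]; simp [hji, hjk]
  rw [this, Finset.card_insert_of_notMem (by simpa using hik), Finset.card_singleton]

lemma ham_add_split {N : ℕ} (u v w : Fin N → Bool)
    (h : hammingDist u w = hammingDist u v + hammingDist v w) :
    Disjoint (Dset u v) (Dset v w) ∧ Dset u w = Dset u v ∪ Dset v w := by
  have hΔ : Dset u w = (Dset u v) ∆ (Dset v w) := by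
    ext j
    rw [Finset.mem_symmDiff]
    simp only [mem_Dset]
    cases hu : u j <;> cases hv : v j <;> cases hw : w j <;> simp
  have hcard : ((Dset u v) ∪ (Dset v w)).card = (Dset u v).card + (Dset v w).card := by
    refine le_antisymm (Finset.card_union_le _ _) ?_
    calc (Dset u v).card + (Dset v w).card = (Dset u w).card := by
          rw [card_Dset, card_Dset, card_Dset, h]
      _ ≤ ((Dset u v) ∪ (Dset v w)).card := by
          refine Finset.card_le_card ?_
          rw [hΔ]
          intro j hj
          rw [Finset.mem_symmDiff] at hj
          rw [Finset.mem_union]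
          tauto
  have hdisj : Disjoint (Dset u v) (Dset v w) :=
    Finset.card_union_eq_card_add_card.mp hcard
  exact ⟨hdisj, by rw [hΔ, hdisj.symmDiff_eq_sup]; rfl⟩

lemma ham_flip_erase {n : ℕ} (x y : Fin n → Bool) (i : Fin n) (h : x i ≠ y i) :
    hammingDist x (flipBit y i) + 1 = hammingDist x y := by
  rw [← card_Dset, ← card_Dset]
  have hmem : i ∈ Dset x y := mem_Dset.mpr h
  have hset : Dset x (flipBit y i) = (Dset x y).erase i := by
    ext j
    rw [Finset.mem_erase, mem_Dset, mem_Dset]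
    by_cases hj : j = i
    · subst hj
      rw [flipBit_self]
      revert h; cases x j <;> cases y j <;> simp
    · rw [flipBit_ne _ hj]; simp [hj]
  rw [hset, Finset.card_erase_add_one hmem]

lemma flipBit_comm {n : ℕ} (x : Fin n → Bool) {i k : Fin n} (h : i ≠ k) :
    flipBit (flipBit x i) k = flipBit (flipBit x k) i := by
  funext j
  simp only [flipBit, Function.update_apply]
  split_ifs with h1 h2 <;> simp_all

lemma reach {n : ℕ} (P : (Fin n → Bool) → Prop) (h0 : P (fun _ => false))
    (hstep : ∀ x k, P x → P (flipBit x k)) : ∀ x, P x := by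
  intro x
  suffices h : ∀ (m : ℕ) (x : Fin n → Bool), hammingDist (fun _ => false) x = m → P x from
    h _ x rfl
  intro m
  induction m with
  | zero =>
    intro x hx
    rw [hammingDist_eq_zero] at hx
    rw [← hx]; exact h0
  | succ m ih =>
    intro x hx
    have hne : (fun _ : Fin n => false) ≠ x := by
      intro hcontra
      rw [← hammingDist_eq_zero] at hcontra
      omega
    obtain ⟨k, hk⟩ : ∃ k, x k = true := by
      by_contra hall
      push_neg at hall
      exact hne (funext fun j => by simpa using (hall j).symm)
    have hk' : (fun _ : Fin n => false) k ≠ x k := by simp [hk]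
    have hx' : hammingDist (fun _ : Fin n => false) (flipBit x k) = m := by
      have := ham_flip_erase (fun _ : Fin n => false) x k hk'
      omega
    have := hstep (flipBit x k) k (ih _ hx')
    rwa [flipBit_flipBit] at this

lemma interleave {n N : ℕ} (φ : (Fin n → Bool) → (Fin N → Bool))
    (hIso : ∀ x y : Fin n → Bool, hammingDist (φ x) (φ y) = hammingDist x y) :
    ∃ (η : Fin n → Fin N) (π : Fin n → Bool → Bool)
      (w : {j : Fin N // j ∉ Set.range η} → Bool),
      Function.Injective η ∧
      (∀ i : Fin n, π i = id ∨ π i = not) ∧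
      ∀ x : Fin n → Bool,
        (∀ i : Fin n, φ x (η i) = π i (x i)) ∧
        (∀ (j : Fin N) (hj : j ∉ Set.range η), φ x j = w ⟨j, hj⟩) := by
  classical
  set x₀ : Fin n → Bool := fun _ => false with hx₀
  set E : (Fin n → Bool) → Fin n → Finset (Fin N) :=
    fun x i => Dset (φ x) (φ (flipBit x i)) with hE
  -- each edge set is a singleton
  have hE1 : ∀ x i, (E x i).card = 1 := by
    intro x i
    rw [hE, card_Dset, hIso, ham_flip]
  -- symmetry of edges
  have hEsymm : ∀ x i, E (flipBit x i) i = E x i := by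
    intro x i
    rw [hE]
    simp only
    rw [flipBit_flipBit, Dset_comm]
  -- disjointness of distinct edges at the same vertex
  have hdisjE : ∀ x (i k : Fin n), i ≠ k → Disjoint (E x i) (E x k) := by
    intro x i k hik
    have hflip : flipBit (flipBit (flipBit x i) i) k = flipBit x k := by
      rw [flipBit_flipBit]
    have e1 : hammingDist (flipBit x i) x = 1 := by rw [hammingDist_comm]; exact ham_flip x i
    have e2 : hammingDist x (flipBit x k) = 1 := ham_flip x k
    have e3 : hammingDist (flipBit x i) (flipBit x k) = 2 := by
      rw [← hflip]; exact ham_flip2 (flipBit x i) hik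
    have hham : hammingDist (φ (flipBit x i)) (φ (flipBit x k)) =
        hammingDist (φ (flipBit x i)) (φ x) + hammingDist (φ x) (φ (flipBit x k)) := by
      rw [hIso, hIso, hIso, e1, e2, e3]
    obtain ⟨hd, -⟩ := ham_add_split _ _ _ hham
    rw [Dset_comm] at hd
    exact hd
  -- transport of edges along edges
  have htrans : ∀ x (i k : Fin n), E (flipBit x k) i = E x i := by
    intro x i k
    by_cases hik : i = k
    · subst hik; exact hEsymm x i
    · -- the 4-cycle argument
      set z := flipBit (flipBit x i) k with hz
      have hz' : z = flipBit (flipBit x k) i := flipBit_comm x hik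
      have hsplit1 : hammingDist (φ x) (φ z) =
          hammingDist (φ x) (φ (flipBit x i)) + hammingDist (φ (flipBit x i)) (φ z) := by
        rw [hIso, hIso, hIso, hz, ham_flip2 _ hik, ham_flip, ham_flip]
      have hsplit2 : hammingDist (φ x) (φ z) =
          hammingDist (φ x) (φ (flipBit x k)) + hammingDist (φ (flipBit x k)) (φ z) := by
        rw [hIso, hIso, hIso, hz', ham_flip2 _ (Ne.symm hik), ham_flip, ham_flip]
      obtain ⟨-, hu1⟩ := ham_add_split _ _ _ hsplit1
      obtain ⟨-, hu2⟩ := ham_add_split _ _ _ hsplit2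
      -- E x i ∪ E (flipBit x i) k = E x k ∪ E (flipBit x k) i
      have hunion : E x i ∪ E (flipBit x i) k = E x k ∪ E (flipBit x k) i := by
        rw [hE]
        simp only
        rw [← hz, ← hz', ← hu1, ← hu2]
      obtain ⟨a, ha⟩ := Finset.card_eq_one.mp (hE1 x i)
      obtain ⟨b, hb⟩ := Finset.card_eq_one.mp (hE1 (flipBit x k) i)
      have hdisj := hdisjE x i k hik
      have hamem : a ∈ E x k ∪ E (flipBit x k) i := by
        rw [← hunion, Finset.mem_union]
        left; rw [ha]; exact Finset.mem_singleton_self a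
      have hanotk : a ∉ E x k := by
        intro hmem
        exact (Finset.disjoint_left.mp hdisj (ha ▸ Finset.mem_singleton_self a)) hmem
      have hab : a ∈ E (flipBit x k) i := by
        rcases Finset.mem_union.mp hamem with h | h
        · exact absurd h hanotk
        · exact h
      rw [hb] at hab
      rw [ha, hb, Finset.mem_singleton.mp hab]
  -- define η
  choose η hη using fun i => Finset.card_eq_one.mp (hE1 x₀ i)
  -- all edge sets are determined
  have hEall : ∀ x i, E x i = {η i} := by
    intro x
    refine reach (fun x => ∀ i, E x i = {η i}) hη ?_ x
    intro x k hx i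
    rw [htrans x i k]
    exact hx i
  have hinj : Function.Injective η := by
    intro i k hik
    by_contra hne
    have := hdisjE x₀ i k (by intro h; exact hne h)
    rw [hEall, hEall, hik, disjoint_self] at this
    simp at this
  -- values off the range of η are constant
  have hw : ∀ x (j : Fin N), j ∉ Set.range η → φ x j = φ x₀ j := by
    refine reach (fun x => ∀ (j : Fin N), j ∉ Set.range η → φ x j = φ x₀ j) ?_ ?_
    · intro j _; rfl
    · intro x k hx j hj
      have hne : φ x j = φ (flipBit x k) j := by
        by_contra hcontra
        have : j ∈ E x k := mem_Dset.mpr hcontra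
        rw [hEall] at this
        exact hj ⟨k, (Finset.mem_singleton.mp this).symm⟩
      rw [← hne]
      exact hx j hj
  -- values on the range of η
  have hv : ∀ x (i : Fin n), φ x (η i) = xor (x i) (φ x₀ (η i)) := by
    refine reach (fun x => ∀ i, φ x (η i) = xor (x i) (φ x₀ (η i))) ?_ ?_
    · intro i
      rw [hx₀]
      simp
    · intro x k hx i
      by_cases hik : i = k
      · subst hik
        have hmem : η i ∈ E x i := by rw [hEall]; exact Finset.mem_singleton_self _
        have hne := mem_Dset.mp hmem
        have : φ (flipBit x i) (η i) = !(φ x (η i)) := by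
          revert hne; cases φ (flipBit x i) (η i) <;> cases φ x (η i) <;> simp
        rw [this, hx i, flipBit_self]
        cases x i <;> cases φ x₀ (η i) <;> simp
      · have hnmem : η i ∉ E x k := by
          rw [hEall]
          simp only [Finset.mem_singleton]
          exact fun h => hik (hinj h)
        have heq : φ x (η i) = φ (flipBit x k) (η i) := by
          by_contra hcontra
          exact hnmem (mem_Dset.mpr hcontra)
        rw [← heq, hx i, flipBit_ne _ hik]
  -- assemble
  refine ⟨η, fun i b => xor b (φ x₀ (η i)), fun p => φ x₀ p.1, hinj, ?_, ?_⟩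
  · intro i
    cases hc : φ x₀ (η i)
    · left; funext b; simp [hc]
    · right; funext b; simp [hc]
  · intro x
    exact ⟨fun i => hv x i, fun j hj => hw x j hj⟩

theorem stmt_11 {n N : ℕ} (φ : (Fin n → Bool) → (Fin N → Bool))
    (hiso : ∀ x y : Fin n → Bool,
      editDist (List.ofFn (φ x)) (List.ofFn (φ y)) = hammingDist x y) :
    ∃ (η : Fin n → Fin N) (π : Fin n → Bool → Bool)
      (w : {j : Fin N // j ∉ Set.range η} → Bool),
      Function.Injective η ∧
      (∀ i : Fin n, π i = id ∨ π i = not) ∧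
      ∀ x : Fin n → Bool,
        (∀ i : Fin n, φ x (η i) = π i (x i)) ∧
        (∀ (j : Fin N) (hj : j ∉ Set.range η), φ x j = w ⟨j, hj⟩) := by
  have hiso' : ∀ x y : Fin n → Bool,
      levenshtein Levenshtein.defaultCost (List.ofFn (φ x)) (List.ofFn (φ y)) =
        hammingDist x y := hiso
  have hlow : ∀ x y : Fin n → Bool, hammingDist x y ≤ hammingDist (φ x) (φ y) := by
    intro x y
    rw [← hiso' x y]
    exact lev_le_ham _ _
  have hub : ∀ (m : ℕ) (x y : Fin n → Bool),
      hammingDist x y = m → hammingDist (φ x) (φ y) ≤ m := by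
    intro m
    induction m with
    | zero =>
      intro x y h
      rw [hammingDist_eq_zero] at h
      rw [h]
      simp
    | succ m ih =>
      intro x y h
      have hne : x ≠ y := by
        intro he
        rw [he, hammingDist_self] at h
        omega
      obtain ⟨i, hi⟩ : ∃ i, x i ≠ y i := by
        by_contra hall
        push_neg at hall
        exact hne (funext hall)
      have h1 : hammingDist x (flipBit y i) = m := by
        have := ham_flip_erase x y i hi
        omega
      have h2 : hammingDist (φ (flipBit y i)) (φ y) = 1 := by
        apply lev_one_ham
        rw [hiso', hammingDist_comm]
        exact ham_flip y i
      calc hammingDist (φ x) (φ y)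
          ≤ hammingDist (φ x) (φ (flipBit y i)) + hammingDist (φ (flipBit y i)) (φ y) :=
            hammingDist_triangle _ _ _
        _ ≤ m + 1 := Nat.add_le_add (ih x _ h1) (le_of_eq h2)
  have hIso : ∀ x y : Fin n → Bool, hammingDist (φ x) (φ y) = hammingDist x y :=
    fun x y => le_antisymm (hub _ x y rfl) (hlow x y)
  exact interleave φ hIso
end
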